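/- Assume each reference output space H_{R_O} is one-dimensional, so that R(A) = Σ_{g∈S_n} U_g^{SR} (A ⊗ [01…(n−1)]^{R_I}) (U_g^{SR})†. Then for any linear operators W and M on S = (H_I ⊗ H_O)^{⊗n} and any scalar c, Tr[ (1/n!)·R(W) · ( R(M) + c·(1^{S R_I} − R(1^S)) ) ] = Tr[W·M]. In particular, the invariant process W^inv = (1/n!)R(W) and invariant measurement operators M^inv = R(M) + c(1^{S R_I} − R(1^S)) reproduce the Born-rule probabilities of W and M. -/
import Mathlib


open Matrix Kronecker

/-- The rank-one projector onto `|0⟩⊗|1⟩⊗…⊗|n−1⟩` in `(ℂ^n)^{⊗n}`. -/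
noncomputable def refProj (n : ℕ) : Matrix (Fin n → Fin n) (Fin n → Fin n) ℂ :=
  Matrix.of fun r r' => if r = (fun k => k) ∧ r' = (fun k => k) then 1 else 0

/-- The unitary `U_g^{SR}` jointly permuting the `n` system factors `H_I ⊗ H_O`
(basis `Fin dI × Fin dO`) and the `n` reference input factors `ℂ^n`, according to
`g ∈ S_n` (the reference output spaces being one-dimensional). -/
noncomputable def permSR (n dI dO : ℕ) (g : Equiv.Perm (Fin n)) :
    Matrix ((Fin n → Fin dI × Fin dO) × (Fin n → Fin n))
      ((Fin n → Fin dI × Fin dO) × (Fin n → Fin n)) ℂ :=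
  Matrix.of fun p q => if q = (p.1 ∘ g, p.2 ∘ g) then 1 else 0

/-- `R(A) = Σ_{g ∈ S_n} U_g^{SR} (A ⊗ [01…(n−1)]^{R_I}) (U_g^{SR})†` (reference
outputs one-dimensional). -/
noncomputable def Rmap (n dI dO : ℕ)
    (A : Matrix (Fin n → Fin dI × Fin dO) (Fin n → Fin dI × Fin dO) ℂ) :
    Matrix ((Fin n → Fin dI × Fin dO) × (Fin n → Fin n))
      ((Fin n → Fin dI × Fin dO) × (Fin n → Fin n)) ℂ :=
  ∑ g : Equiv.Perm (Fin n),
    permSR n dI dO g * (A ⊗ₖ refProj n) * (permSR n dI dO g)ᴴ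

lemma comp_eq_id_iff {n : ℕ} (g : Equiv.Perm (Fin n)) (f : Fin n → Fin n) :
    (f ∘ ⇑g = fun k => k) ↔ f = ⇑g.symm := by
  constructor
  · intro h
    funext x
    have := congrFun h (g.symm x)
    simpa using this
  · intro h; subst h; funext x; simp

lemma Rmap_apply (n dI dO : ℕ)
    (A : Matrix (Fin n → Fin dI × Fin dO) (Fin n → Fin dI × Fin dO) ℂ) (p q) :
    Rmap n dI dO A p q = ∑ g : Equiv.Perm (Fin n),
      if p.2 = ⇑g.symm ∧ q.2 = ⇑g.symm then A (p.1 ∘ ⇑g) (q.1 ∘ ⇑g) else 0 := by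
  unfold Rmap
  rw [Matrix.sum_apply]
  refine Finset.sum_congr rfl fun g _ => ?_
  rw [Matrix.mul_apply]
  have h1 : ∀ b, (permSR n dI dO g * (A ⊗ₖ refProj n)) p b
      = (A ⊗ₖ refProj n) (p.1 ∘ ⇑g, p.2 ∘ ⇑g) b := by
    intro b
    rw [Matrix.mul_apply]
    simp [permSR, Matrix.of_apply, ite_mul]
  have h2 : ∀ b, (permSR n dI dO g)ᴴ b q = if b = (q.1 ∘ ⇑g, q.2 ∘ ⇑g) then 1 else 0 := by
    intro b
    simp only [Matrix.conjTranspose_apply, permSR, Matrix.of_apply,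
      apply_ite (star : ℂ → ℂ), star_one, star_zero]
  simp only [h2, mul_ite, mul_one, mul_zero]
  rw [Finset.sum_ite_eq' Finset.univ ((q.1 ∘ ⇑g, q.2 ∘ ⇑g))]
  rw [if_pos (Finset.mem_univ _), h1]
  simp [Matrix.kroneckerMap_apply, refProj, comp_eq_id_iff, ite_and, mul_ite]

lemma sum_comp {β : Type*} [Fintype β] {n : ℕ} (g : Equiv.Perm (Fin n))
    (F : (Fin n → β) → ℂ) : ∑ f : Fin n → β, F (f ∘ ⇑g) = ∑ f : Fin n → β, F f := by
  apply Fintype.sum_equiv (Equiv.arrowCongr g.symm (Equiv.refl β))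
  intro x
  rfl

lemma perm_card (n : ℕ) :
    (Finset.univ : Finset (Equiv.Perm (Fin n))).card = n.factorial := by
  simp [Finset.card_univ, Fintype.card_perm, Fintype.card_fin]

lemma trace_Rmap (n dI dO : ℕ)
    (A : Matrix (Fin n → Fin dI × Fin dO) (Fin n → Fin dI × Fin dO) ℂ) :
    (Rmap n dI dO A).trace = (n.factorial : ℂ) * A.trace := by
  simp only [Matrix.trace, Matrix.diag, Rmap_apply, and_self]
  rw [Finset.sum_comm]
  rw [← perm_card n, Finset.card_eq_sum_ones, Nat.cast_sum, Nat.cast_one,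
    Finset.sum_mul, one_mul]
  refine Finset.sum_congr rfl fun g _ => ?_
  rw [Fintype.sum_prod_type]
  have : ∀ p1 : Fin n → Fin dI × Fin dO,
      (∑ p2 : Fin n → Fin n, if p2 = ⇑g.symm then A (p1 ∘ ⇑g) (p1 ∘ ⇑g) else 0)
        = A (p1 ∘ ⇑g) (p1 ∘ ⇑g) := by
    intro p1
    rw [Finset.sum_ite_eq' Finset.univ]
    simp
  simp only [this]
  rw [sum_comp g (fun f => A f f)]

lemma sum_pair {n dI dO : ℕ} (g h : Equiv.Perm (Fin n))
    (F : (Fin n → Fin dI × Fin dO) → (Fin n → Fin dI × Fin dO) → ℂ) :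
    (∑ p : (Fin n → Fin dI × Fin dO) × (Fin n → Fin n),
      ∑ q : (Fin n → Fin dI × Fin dO) × (Fin n → Fin n),
        if q.2 = ⇑h.symm ∧ p.2 = ⇑h.symm then
          (if p.2 = ⇑g.symm ∧ q.2 = ⇑g.symm then F p.1 q.1 else 0) else 0)
      = if g = h then ∑ p1, ∑ q1, F p1 q1 else 0 := by
  by_cases hg : g = h
  · subst hg
    rw [if_pos rfl]
    rw [Fintype.sum_prod_type]
    have inner : ∀ (p1 : Fin n → Fin dI × Fin dO) (p2 : Fin n → Fin n),
        (∑ q : (Fin n → Fin dI × Fin dO) × (Fin n → Fin n),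
          if q.2 = ⇑g.symm ∧ p2 = ⇑g.symm then
            (if p2 = ⇑g.symm ∧ q.2 = ⇑g.symm then F p1 q.1 else 0) else 0)
          = if p2 = ⇑g.symm then ∑ q1, F p1 q1 else 0 := by
      intro p1 p2
      by_cases hp : p2 = ⇑g.symm
      · rw [if_pos hp]
        simp only [hp, true_and, and_true, eq_self_iff_true]
        have dup : ∀ (c : Prop) [Decidable c] (x : ℂ),
            (if c then (if c then x else 0) else 0) = if c then x else 0 := by
          intro c _ x; split_ifs <;> rfl
        simp only [dup]
        rw [Fintype.sum_prod_type]
        refine Finset.sum_congr rfl fun q1 _ => ?_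
        rw [Finset.sum_ite_eq' Finset.univ]
        simp
      · rw [if_neg hp]
        refine Finset.sum_eq_zero fun q _ => ?_
        split_ifs with h1 h2
        · exact absurd h1.2 hp
        · rfl
        · rfl
    simp only [inner]
    refine Finset.sum_congr rfl fun p1 _ => ?_
    rw [Finset.sum_ite_eq' Finset.univ]
    simp
  · rw [if_neg hg]
    refine Finset.sum_eq_zero fun p _ => Finset.sum_eq_zero fun q _ => ?_
    split_ifs with h1 h2
    · exfalso
      apply hg
      have hfun : ⇑g.symm = ⇑h.symm := h2.1.symm.trans h1.2
      have h3 : g.symm = h.symm := Equiv.coe_fn_injective hfun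
      rw [← Equiv.symm_symm g, h3, Equiv.symm_symm]
    · rfl
    · rfl

lemma swap4 {α β : Type*} [Fintype α] [Fintype β] (f : α → α → β → β → ℂ) :
    (∑ p : α, ∑ q : α, ∑ g : β, ∑ h : β, f p q g h)
      = ∑ g : β, ∑ h : β, ∑ p : α, ∑ q : α, f p q g h :=
  calc (∑ p : α, ∑ q : α, ∑ g : β, ∑ h : β, f p q g h)
      = ∑ p : α, ∑ g : β, ∑ q : α, ∑ h : β, f p q g h :=
        Finset.sum_congr rfl fun p _ => Finset.sum_comm
    _ = ∑ g : β, ∑ p : α, ∑ q : α, ∑ h : β, f p q g h := Finset.sum_comm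
    _ = ∑ g : β, ∑ p : α, ∑ h : β, ∑ q : α, f p q g h :=
        Finset.sum_congr rfl fun g _ => Finset.sum_congr rfl fun p _ => Finset.sum_comm
    _ = ∑ g : β, ∑ h : β, ∑ p : α, ∑ q : α, f p q g h :=
        Finset.sum_congr rfl fun g _ => Finset.sum_comm

set_option maxHeartbeats 1000000 in
lemma trace_Rmap_mul (n dI dO : ℕ)
    (A B : Matrix (Fin n → Fin dI × Fin dO) (Fin n → Fin dI × Fin dO) ℂ) :
    (Rmap n dI dO A * Rmap n dI dO B).trace = (n.factorial : ℂ) * (A * B).trace := by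
  have hAB : (A * B).trace = ∑ p1, ∑ q1, A p1 q1 * B q1 p1 := by
    simp [Matrix.trace, Matrix.diag, Matrix.mul_apply]
  simp only [Matrix.trace, Matrix.diag, Matrix.mul_apply, Rmap_apply]
  simp only [Finset.sum_mul_sum, ite_mul, zero_mul, mul_ite, mul_zero]
  rw [swap4]
  have step : ∀ g : Equiv.Perm (Fin n),
      (∑ h : Equiv.Perm (Fin n),
        ∑ p : (Fin n → Fin dI × Fin dO) × (Fin n → Fin n),
        ∑ q : (Fin n → Fin dI × Fin dO) × (Fin n → Fin n),
          if q.2 = ⇑h.symm ∧ p.2 = ⇑h.symm then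
            (if p.2 = ⇑g.symm ∧ q.2 = ⇑g.symm then
              A (p.1 ∘ ⇑g) (q.1 ∘ ⇑g) * B (q.1 ∘ ⇑h) (p.1 ∘ ⇑h) else 0) else 0)
        = (A * B).trace := by
    intro g
    have coll : ∀ h : Equiv.Perm (Fin n),
        (∑ p : (Fin n → Fin dI × Fin dO) × (Fin n → Fin n),
        ∑ q : (Fin n → Fin dI × Fin dO) × (Fin n → Fin n),
          if q.2 = ⇑h.symm ∧ p.2 = ⇑h.symm then
            (if p.2 = ⇑g.symm ∧ q.2 = ⇑g.symm then
              A (p.1 ∘ ⇑g) (q.1 ∘ ⇑g) * B (q.1 ∘ ⇑h) (p.1 ∘ ⇑h) else 0) else 0)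
          = if g = h then
              ∑ p1, ∑ q1, A (p1 ∘ ⇑g) (q1 ∘ ⇑g) * B (q1 ∘ ⇑h) (p1 ∘ ⇑h) else 0 :=
      fun h => sum_pair g h (fun p1 q1 => A (p1 ∘ ⇑g) (q1 ∘ ⇑g) * B (q1 ∘ ⇑h) (p1 ∘ ⇑h))
    simp only [coll]
    rw [Finset.sum_ite_eq Finset.univ g
      (fun h => ∑ p1, ∑ q1, A (p1 ∘ ⇑g) (q1 ∘ ⇑g) * B (q1 ∘ ⇑h) (p1 ∘ ⇑h))]
    rw [if_pos (Finset.mem_univ g), hAB]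
    rw [sum_comp g (fun p1 => ∑ q1, A p1 (q1 ∘ ⇑g) * B (q1 ∘ ⇑g) p1)]
    exact Finset.sum_congr rfl fun p1 _ =>
      sum_comp g (fun q1 => A p1 q1 * B q1 p1)
  simp only [step]
  rw [← perm_card n, Finset.card_eq_sum_ones, Nat.cast_sum, Nat.cast_one,
    Finset.sum_mul, one_mul]
  exact Finset.sum_congr rfl fun _ _ => hAB

/-- the invariant process `W^inv = (1/n!)·R(W)` and the invariant
measurement operators `M^inv = R(M) + c·(1^{S R_I} − R(1^S))` reproduce the Born-rule
probabilities of `W` and `M`: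
`Tr[(1/n!)·R(W)·(R(M) + c·(1^{S R_I} − R(1^S)))] = Tr[W·M]`. -/
theorem invariant_born_rule (n dI dO : ℕ)
    (W M : Matrix (Fin n → Fin dI × Fin dO) (Fin n → Fin dI × Fin dO) ℂ) (c : ℂ) :
    ((((n.factorial : ℂ))⁻¹ • Rmap n dI dO W) *
        (Rmap n dI dO M + c • ((1 : Matrix _ _ ℂ) - Rmap n dI dO 1))).trace =
      (W * M).trace := by
  have hne : (n.factorial : ℂ) ≠ 0 := Nat.cast_ne_zero.mpr (Nat.factorial_ne_zero n)
  have h1 := trace_Rmap_mul n dI dO W M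
  have h2 := trace_Rmap_mul n dI dO W 1
  have h3 := trace_Rmap n dI dO W
  rw [Matrix.mul_one] at h2
  simp only [Matrix.smul_mul, Matrix.mul_add, Matrix.mul_smul, Matrix.mul_sub,
    Matrix.mul_one, Matrix.trace_smul, Matrix.trace_add, Matrix.trace_sub,
    h1, h2, h3, smul_eq_mul]
  rw [sub_self, mul_zero, add_zero, ← mul_assoc, inv_mul_cancel₀ hne, one_mul]
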